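/- Let ν be a finite signed Borel measure on ℝ satisfying conditions (A1) and (A2). Then the function f_ν is right-continuous on ℝ: for every x₀ ∈ ℝ, f_ν(x) → f_ν(x₀) as x → x₀ from the right. -/

import Mathlib

open MeasureTheory
open scoped ENNReal

/-- The atomic part of ν evaluated on (−∞, x]: ν_d((−∞,x]) = ∑_{y ∈ D, y ≤ x} ν({y}). -/
noncomputable def atomicPartIic (ν : MeasureTheory.SignedMeasure ℝ) (x : ℝ) : ℝ :=
  ∑' y : {y : ℝ // ν {y} ≠ 0 ∧ y ≤ x}, ν {(y : ℝ)}

/-- ν^c((−∞, x]), where ν^c := ν − ν_d is the atomless part of ν. -/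
noncomputable def contPartIic (ν : MeasureTheory.SignedMeasure ℝ) (x : ℝ) : ℝ :=
  ν (Set.Iic x) - atomicPartIic ν x

/-- The function f_ν(x) := exp(−2 ν^c((−∞, x])) · ∏_{y ∈ D, y ≤ x} (1 − ν({y}))/(1 + ν({y})). -/
noncomputable def fnu (ν : MeasureTheory.SignedMeasure ℝ) (x : ℝ) : ℝ :=
  Real.exp (-2 * contPartIic ν x) *
    ∏' y : {y : ℝ // ν {y} ≠ 0 ∧ y ≤ x}, (1 - ν {(y : ℝ)}) / (1 + ν {(y : ℝ)})

/-!
Under (A1) every factor `(1 - ν{y}) / (1 + ν{y})` is positive, so `f_ν = exp G` with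
`G x = -2 (ν(-∞, x] - ∑_{y ≤ x} ν{y}) + ∑_{y ≤ x} log ((1 - ν{y}) / (1 + ν{y}))`.
Both `y ↦ ν{y}` and `y ↦ log ((1 - ν{y}) / (1 + ν{y})) = O(ν{y})` are absolutely summable over
all of `ℝ`, so the two atomic sums are right-continuous by dominated convergence, while
`x ↦ ν(-∞, x]` is right-continuous by continuity from above of the Jordan parts of `ν`.
-/

open Filter Set Topology

lemma tendsto_tsum_indicator_Iic_nhdsGT {α E : Type*} [LinearOrder α] [TopologicalSpace α]
    [OrderTopology α] [NormedAddCommGroup E] [CompleteSpace E] {f : α → E}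
    (hf : Summable fun y => ‖f y‖) (x₀ : α) :
    Tendsto (fun x => ∑' y, (Iic x).indicator f y) (𝓝[>] x₀)
      (𝓝 (∑' y, (Iic x₀).indicator f y)) := by
  refine tendsto_tsum_of_dominated_convergence hf (fun y => ?_)
    (.of_forall fun x y => norm_indicator_le_norm_self f y)
  rcases le_or_gt y x₀ with hy | hy
  · refine tendsto_const_nhds.congr' ?_
    filter_upwards [self_mem_nhdsWithin] with x hx
    rw [indicator_of_mem (mem_Iic.2 hy), indicator_of_mem (mem_Iic.2 (hy.trans (le_of_lt hx)))]
  · refine tendsto_const_nhds.congr' ?_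
    filter_upwards [Ioo_mem_nhdsGT hy] with x hx
    rw [indicator_of_notMem (notMem_Iic.2 hy), indicator_of_notMem (notMem_Iic.2 hx.2)]

lemma summable_log_one_sub_div_one_add {ι : Type*} {u : ι → ℝ} (hu : Summable u) :
    Summable fun i => Real.log ((1 - u i) / (1 + u i)) := by
  have hsub := (Real.summable_log_one_add_of_summable hu.neg).sub
    (Real.summable_log_one_add_of_summable hu)
  refine hsub.congr_cofinite ?_
  filter_upwards [(hu.tendsto_cofinite_zero.eventually (Ioo_mem_nhds neg_one_lt_zero one_pos))]
    with i hi
  rw [Real.log_div (by linarith [hi.2] : 0 < 1 - u i).ne' (by linarith [hi.1] : 0 < 1 + u i).ne',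
    ← sub_eq_add_neg]

lemma tendsto_measureReal_Iic_nhdsGT (μ : Measure ℝ) [IsFiniteMeasure μ] (x₀ : ℝ) :
    Tendsto (fun x => μ.real (Iic x)) (𝓝[>] x₀) (𝓝 (μ.real (Iic x₀))) := by
  have hinter : ⋂ r > x₀, Iic r = Iic x₀ := by
    ext y
    simpa using ⟨fun h => le_of_forall_gt_imp_ge_of_dense h, fun h r hr => h.trans hr.le⟩
  have h := tendsto_measure_biInter_gt (μ := μ) (s := Iic) (a := x₀)
    (fun r _ => measurableSet_Iic.nullMeasurableSet) (fun _ _ _ hij => Iic_subset_Iic.2 hij)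
    ⟨x₀ + 1, by linarith, measure_ne_top _ _⟩
  rw [hinter] at h
  exact (ENNReal.tendsto_toReal (measure_ne_top _ _)).comp h

lemma summable_measureReal_singleton {α : Type*} [MeasurableSpace α]
    [MeasurableSingletonClass α] (μ : Measure α) [IsFiniteMeasure μ] :
    Summable fun y => μ.real {y} := by
  have hle : ∑' y, μ {y} ≤ μ univ :=
    (tsum_meas_le_meas_iUnion_of_disjoint μ (fun y => measurableSet_singleton y)
      (fun _ _ h => disjoint_singleton.2 h)).trans (measure_mono (subset_univ _))
  exact ENNReal.summable_toReal (ne_top_of_le_ne_top (measure_ne_top μ univ) hle)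

namespace MeasureTheory.SignedMeasure

lemma tendsto_apply_Iic_nhdsGT (ν : SignedMeasure ℝ) (x₀ : ℝ) :
    Tendsto (fun x => ν (Iic x)) (𝓝[>] x₀) (𝓝 (ν (Iic x₀))) := by
  simp_rw [ν.apply_eq_posPart_real_sub_negPart_real measurableSet_Iic]
  exact (tendsto_measureReal_Iic_nhdsGT _ x₀).sub (tendsto_measureReal_Iic_nhdsGT _ x₀)

lemma summable_apply_singleton {α : Type*} [MeasurableSpace α] [MeasurableSingletonClass α]
    (ν : SignedMeasure α) : Summable fun y => ν {y} := by
  simp_rw [ν.apply_eq_posPart_real_sub_negPart_real (measurableSet_singleton _)]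
  exact (summable_measureReal_singleton _).sub (summable_measureReal_singleton _)

lemma abs_apply_lt_one_of_totalVariation_lt_one {α : Type*} [MeasurableSpace α]
    (ν : SignedMeasure α) {s : Set α} (hs : ν.totalVariation s < 1) : |ν s| < 1 :=
  (ν.norm_le_totalVariation s).trans_lt (ENNReal.toReal_lt_of_lt_ofReal (by simpa using hs))

end MeasureTheory.SignedMeasure

lemma tsum_atoms_Iic_eq_tsum_indicator (ν : SignedMeasure ℝ) {g : ℝ → ℝ}
    (hg : ∀ y, ν {y} = 0 → g y = 0) (x : ℝ) :
    ∑' y : {y : ℝ // ν {y} ≠ 0 ∧ y ≤ x}, g y = ∑' y, (Iic x).indicator g y := by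
  refine (tsum_subtype {y | ν {y} ≠ 0 ∧ y ≤ x} g).trans ?_
  congr 1
  ext y
  by_cases h : ν {y} = 0 <;> simp [indicator_apply, h, hg]

lemma fnu_eq_exp (ν : SignedMeasure ℝ) (hA1 : ∀ a : ℝ, ν.totalVariation {a} < 1) (x : ℝ) :
    fnu ν x = Real.exp (-2 * (ν (Iic x) - ∑' y, (Iic x).indicator (fun y => ν {y}) y)
      + ∑' y, (Iic x).indicator (fun y => Real.log ((1 - ν {y}) / (1 + ν {y}))) y) := by
  have hpos (y : ℝ) : 0 < (1 - ν {y}) / (1 + ν {y}) := by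
    have := abs_lt.1 (ν.abs_apply_lt_one_of_totalVariation_lt_one (hA1 y))
    exact div_pos (by linarith) (by linarith)
  have hlog := (summable_log_one_sub_div_one_add ν.summable_apply_singleton).subtype
    (fun y => ν {y} ≠ 0 ∧ y ≤ x)
  rw [fnu, contPartIic, atomicPartIic,
    ← Real.rexp_tsum_eq_tprod (f := fun y : {y : ℝ // ν {y} ≠ 0 ∧ y ≤ x} =>
      (1 - ν {(y : ℝ)}) / (1 + ν {(y : ℝ)})) (fun y => hpos y) hlog,
    tsum_atoms_Iic_eq_tsum_indicator ν (fun y h => h) x,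
    tsum_atoms_Iic_eq_tsum_indicator ν (g := fun y => Real.log ((1 - ν {y}) / (1 + ν {y})))
      (fun y h => by simp [h]) x, ← Real.exp_add]

/-- Under (A1) (and (A2), automatic for a signed measure), the function
f_ν is right-continuous: for every x₀ ∈ ℝ, f_ν(x) → f_ν(x₀) as x → x₀ from the right. -/
theorem fnu_rightContinuous (ν : MeasureTheory.SignedMeasure ℝ)
    (hA1 : ∀ a : ℝ, ν.totalVariation {a} < 1) :
    ∀ x₀ : ℝ, Filter.Tendsto (fnu ν) (nhdsWithin x₀ (Set.Ioi x₀)) (nhds (fnu ν x₀)) := by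
  intro x₀
  have hatoms := ν.summable_apply_singleton
  have hlog := summable_log_one_sub_div_one_add hatoms
  rw [funext (fnu_eq_exp ν hA1)]
  exact ((((ν.tendsto_apply_Iic_nhdsGT x₀).sub
    (tendsto_tsum_indicator_Iic_nhdsGT hatoms.norm x₀)).const_mul (-2)).add
    (tendsto_tsum_indicator_Iic_nhdsGT hlog.norm x₀)).rexp
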